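/- arXiv:1110.5976 — 2 statements merged into one kernel-verified Lean document; each statement's English description precedes it below -/
import Mathlib

section
/- The partition-generating identity Σ_{π} f(π) a^{l(π)} t^{|π|−l(π)} = Exp( (1/(1−𝕃^{−1})) · a/(1−t) ) holds, where the sum is over all partitions π = (1^{b_1}2^{b_2}⋯), f(π) = ∏_{l≥1} [End(ℂ^{b_l})]/[GL(b_l)] = ∏_{l≥1} 𝕃^{b_l^2}/∏_{k=1}^{b_l}(𝕃^{b_l}−𝕃^{b_l−k}), l(π) is the number of parts and |π| the size of π. -/
open Finset

noncomputable section

namespace Stmt11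

/-- Formal power series in three variables: `0 ↦ q = 𝕃⁻¹`, `1 ↦ t`, `2 ↦ a`. -/
abbrev MPS := MvPowerSeries (Fin 3) ℚ

/-- The `k`-th Adams operation `ψ_k` on the λ-ring of motivic series: it raises every
variable (here `q = 𝕃⁻¹`, `t`, `a`) to the `k`-th power. -/
def adams (k : ℕ) (f : MPS) : MPS := fun d =>
  if ∀ i, k ∣ d i then
    MvPowerSeries.coeff (Finsupp.mapRange (· / k) (Nat.zero_div k) d) f
  else 0

/-- Total degree of a monomial. -/
def tdeg (d : Fin 3 →₀ ℕ) : ℕ := d.sum fun _ m => m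

/-- The ordinary exponential `exp F = Σ_m F^m/m!` of a series with vanishing constant
term (coefficientwise, the sum is finite). -/
def pexp (f : MPS) : MPS := fun d =>
  ∑ m ∈ range (tdeg d + 1), (m.factorial : ℚ)⁻¹ * MvPowerSeries.coeff d (f ^ m)

/-- `Σ_{k ≥ 1} ψ_k(f)/k` (coefficientwise a finite sum). -/
def plethLog (f : MPS) : MPS := fun d =>
  ∑ k ∈ Icc 1 (tdeg d), (k : ℚ)⁻¹ * MvPowerSeries.coeff d (adams k f)

/-- The plethystic exponential `Exp(f) = exp(Σ_{k ≥ 1} ψ_k(f)/k)`. -/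
def PExp (f : MPS) : MPS := pexp (plethLog f)

/-- `f(π) = ∏_{l ≥ 1} [End(ℂ^{b_l})]/[GL(b_l)]`, written in `q = 𝕃⁻¹`:
`f(π) = ∏_l ∏_{k=1}^{b_l} (1 − q^k)⁻¹`, as a power series in `q`. -/
def fpart {M : ℕ} (π : M.Partition) : PowerSeries ℚ :=
  ∏ l ∈ π.parts.toFinset,
    ∏ k ∈ Icc 1 (π.parts.count l), (1 - (PowerSeries.X : PowerSeries ℚ) ^ k)⁻¹

/-- The partition sum `Σ_π f(π) a^{l(π)} t^{|π|−l(π)}`: the coefficient of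
`q^{d 0} t^{d 1} a^{d 2}` is the `q^{d 0}`-coefficient of `Σ f(π)` over partitions with
`d 2` parts and total size `d 1 + d 2`. -/
def lhs : MPS := fun d =>
  PowerSeries.coeff (d 0)
    (∑ π ∈ univ.filter (fun π : Nat.Partition (d 1 + d 2) => π.parts.card = d 2),
      fpart π)

/-- The argument `(1/(1−𝕃⁻¹)) · a/(1−t) = Σ_{i,m ≥ 0} q^i t^m a` of the plethystic
exponential. -/
def arg : MPS := fun d => if d 2 = 1 then (1 : ℚ) else 0

/-!
Both sides are pinned down by one first-order recursion in `a`. Write `D = a ∂_a` and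
`M = Σ_{k ≥ 1} Σ_{i,m ≥ 0} (q^i t^m a)^k`, which is divisible by `a`; a series `F` with
`D F = M F` is determined by its `a`-free part, and both sides have `a`-free part `1`.
For `Exp`, `D exp L = (D L) exp L` and `D (Σ_k ψ_k(arg)/k) = M`. For the partition sum, `D`
multiplies the term of `π` by its number of parts `Σ_l b_l`, and the `q`-identity
`b/(q;q)_b = Σ_{k=1}^b (1 - q^k)⁻¹/(q;q)_{b-k}` turns this into a sum over the ways of removing
`k` copies of a part `l`: the removed parts carry `a^k t^{k(l-1)}`, and `(1 - q^k)⁻¹ = Σ_i q^{ik}`,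
so the coefficient is again `M`.
-/

open scoped PowerSeries

section QSeries

open PowerSeries

variable {K : Type*} [Field K]

lemma constantCoeff_one_sub_X_pow {k : ℕ} (hk : k ≠ 0) :
    constantCoeff (1 - X ^ k : K⟦X⟧) = 1 := by
  simp [zero_pow hk]

lemma one_sub_X_pow_mul_inv {k : ℕ} (hk : k ≠ 0) : (1 - X ^ k : K⟦X⟧) * (1 - X ^ k)⁻¹ = 1 :=
  PowerSeries.mul_inv_cancel _ (by simp [constantCoeff_one_sub_X_pow hk])

lemma coeff_inv_one_sub_X_pow {k : ℕ} (hk : k ≠ 0) (n : ℕ) :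
    coeff n ((1 - X ^ k : K⟦X⟧)⁻¹) = if k ∣ n then 1 else 0 := by
  suffices h : (1 - X ^ k : K⟦X⟧)⁻¹ = mk fun n => if k ∣ n then 1 else 0 by rw [h, coeff_mk]
  rw [PowerSeries.inv_eq_iff_mul_eq_one (by simp [constantCoeff_one_sub_X_pow hk])]
  ext n
  rw [mul_sub, mul_one, map_sub, coeff_mul_X_pow', coeff_mk, coeff_mk, coeff_one]
  rcases Nat.eq_zero_or_pos n with rfl | hn
  · simp [hk]
  · by_cases hkn : k ≤ n
    · simp [hkn, hn.ne', Nat.dvd_sub_iff_left hkn dvd_rfl]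
    · have hnd : ¬ k ∣ n := fun h => hkn (Nat.le_of_dvd hn h)
      simp [hkn, hn.ne', hnd]

lemma coeff_inv_one_sub_X_pow_mul {k : ℕ} (hk : k ≠ 0) (n : ℕ) (f : K⟦X⟧) :
    coeff n ((1 - X ^ k)⁻¹ * f) = ∑ i ∈ (range (n + 1)).filter (k ∣ ·), coeff (n - i) f := by
  rw [coeff_mul, Nat.sum_antidiagonal_eq_sum_range_succ_mk, sum_filter]
  refine sum_congr rfl fun i _ => ?_
  rw [coeff_inv_one_sub_X_pow hk]
  split_ifs <;> simp

def invQPochhammer (b : ℕ) : K⟦X⟧ := ∏ k ∈ Icc 1 b, (1 - X ^ k)⁻¹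

lemma invQPochhammer_zero : (invQPochhammer 0 : K⟦X⟧) = 1 := by simp [invQPochhammer]

lemma one_sub_X_pow_mul_invQPochhammer (b : ℕ) :
    (1 - X ^ (b + 1)) * (invQPochhammer (b + 1) : K⟦X⟧) = invQPochhammer b := by
  rw [invQPochhammer, prod_Icc_succ_top (by omega), mul_left_comm,
    one_sub_X_pow_mul_inv b.succ_ne_zero, mul_one, invQPochhammer]

lemma sum_range_X_pow_mul_invQPochhammer (b : ℕ) :
    ∑ j ∈ range (b + 1), X ^ j * (invQPochhammer j : K⟦X⟧) = invQPochhammer b := by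
  induction b with
  | zero => simp [invQPochhammer_zero]
  | succ b ih =>
    rw [sum_range_succ, ih, ← one_sub_X_pow_mul_invQPochhammer b]
    ring

lemma sum_Icc_X_pow_mul_invQPochhammer (b : ℕ) :
    ∑ k ∈ Icc 1 (b + 1), X ^ (b + 1 - k) * (invQPochhammer (b + 1 - k) : K⟦X⟧) =
      invQPochhammer b := by
  rw [← sum_range_X_pow_mul_invQPochhammer]
  refine sum_nbij' (b + 1 - ·) (b + 1 - ·) ?_ ?_ ?_ ?_ fun _ _ => rfl <;>
    intro x hx <;> simp at hx ⊢ <;> omega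

/-- After multiplying by `1 - q^b`, split `1 - q^b = (1 - q^{b-k}) + q^{b-k} (1 - q^k)` in the
`k`-th term: the first pieces give the identity for `b - 1`, the second ones telescope to
`1/(q;q)_{b-1}`. -/
lemma natCast_mul_invQPochhammer (b : ℕ) :
    (b : K⟦X⟧) * invQPochhammer b = ∑ k ∈ Icc 1 b, (1 - X ^ k)⁻¹ * invQPochhammer (b - k) := by
  induction b with
  | zero => simp
  | succ b ih =>
    have hne : (1 - X ^ (b + 1) : K⟦X⟧) ≠ 0 := fun h => by
      simpa [h] using constantCoeff_one_sub_X_pow (K := K) b.succ_ne_zero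
    have hterm : ∀ k ∈ Icc 1 b,
        (1 - X ^ (b + 1) : K⟦X⟧) * ((1 - X ^ k)⁻¹ * invQPochhammer (b + 1 - k))
        = (1 - X ^ k)⁻¹ * invQPochhammer (b - k) +
          X ^ (b + 1 - k) * invQPochhammer (b + 1 - k) := by
      intro k hk
      obtain ⟨j, rfl⟩ : ∃ j, b = j + k := ⟨b - k, by simp at hk; omega⟩
      have hk0 : k ≠ 0 := by simp at hk; omega
      rw [show j + k + 1 - k = j + 1 by omega, Nat.add_sub_cancel,
        ← one_sub_X_pow_mul_invQPochhammer j]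
      linear_combination
        (X ^ (j + 1) * invQPochhammer (j + 1)) * one_sub_X_pow_mul_inv (K := K) hk0
    refine mul_left_cancel₀ hne ?_
    calc (1 - X ^ (b + 1)) * (((b + 1 : ℕ) : K⟦X⟧) * invQPochhammer (b + 1))
        = (b : K⟦X⟧) * invQPochhammer b + invQPochhammer b := by
          rw [mul_left_comm, one_sub_X_pow_mul_invQPochhammer]; push_cast; ring
      _ = ∑ k ∈ Icc 1 b, (1 - X ^ k)⁻¹ * invQPochhammer (b - k)
          + ∑ k ∈ Icc 1 (b + 1), X ^ (b + 1 - k) * invQPochhammer (b + 1 - k) := by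
          rw [ih, sum_Icc_X_pow_mul_invQPochhammer]
      _ = _ := by
          rw [mul_sum, sum_Icc_succ_top (by omega), sum_Icc_succ_top (by omega),
            sum_congr rfl hterm, sum_add_distrib, Nat.sub_self, invQPochhammer_zero, mul_one,
            mul_one, one_sub_X_pow_mul_inv (Nat.succ_ne_zero b), pow_zero, add_assoc]

end QSeries

section MultisetWeight

open PowerSeries

variable {K : Type*} [Field K] {α : Type*} [DecidableEq α]

def multisetWeight (s : Multiset α) : K⟦X⟧ := ∏ l ∈ s.toFinset, invQPochhammer (s.count l)

lemma multisetWeight_sub_replicate {s : Multiset α} {l : α} (hl : l ∈ s.toFinset) (k : ℕ) :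
    (multisetWeight (s - Multiset.replicate k l) : K⟦X⟧) =
      invQPochhammer (s.count l - k) * ∏ l' ∈ s.toFinset.erase l, invQPochhammer (s.count l') := by
  have hcount : ∀ x, (s - Multiset.replicate k l).count x = s.count x - if l = x then k else 0 := by
    intro x
    rw [Multiset.count_sub, Multiset.count_replicate]
  have hsub : (s - Multiset.replicate k l).toFinset ⊆ s.toFinset :=
    Multiset.toFinset_subset.2 (Multiset.subset_of_le tsub_le_self)
  rw [multisetWeight, prod_subset hsub, ← mul_prod_erase _ _ hl, hcount, if_pos rfl]
  · refine congrArg _ (prod_congr rfl fun x hx => ?_)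
    rw [hcount, if_neg (ne_of_mem_erase hx).symm, Nat.sub_zero]
  · intro x _ hx
    rw [Multiset.mem_toFinset, ← Multiset.count_ne_zero, not_not] at hx
    rw [hx, invQPochhammer_zero]

lemma card_mul_multisetWeight (s : Multiset α) :
    (Multiset.card s : K⟦X⟧) * multisetWeight s =
      ∑ l ∈ s.toFinset, ∑ k ∈ Icc 1 (s.count l),
        (1 - X ^ k)⁻¹ * multisetWeight (s - Multiset.replicate k l) := by
  rw [← Multiset.toFinset_sum_count_eq, Nat.cast_sum, sum_mul]
  refine sum_congr rfl fun l hl => ?_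
  rw [multisetWeight, ← mul_prod_erase _ _ hl, ← mul_assoc, natCast_mul_invQPochhammer, sum_mul]
  refine sum_congr rfl fun k _ => ?_
  rw [multisetWeight_sub_replicate hl, mul_assoc]

end MultisetWeight

section PartitionSum

open PowerSeries

def partsWith (n N : ℕ) : Finset (Multiset ℕ) :=
  (univ.filter fun π : N.Partition => π.parts.card = n).image Nat.Partition.parts

lemma mem_partsWith {n N : ℕ} {s : Multiset ℕ} :
    s ∈ partsWith n N ↔ (∀ x ∈ s, 0 < x) ∧ s.sum = N ∧ Multiset.card s = n := by
  simp only [partsWith, mem_image, mem_filter, mem_univ, true_and]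
  constructor
  · rintro ⟨π, hπ, rfl⟩
    exact ⟨fun x hx => π.parts_pos hx, π.parts_sum, hπ⟩
  · rintro ⟨hpos, hsum, hcard⟩
    exact ⟨⟨s, fun hx => hpos _ hx, hsum⟩, hcard, rfl⟩

lemma le_of_mem_partsWith {n N : ℕ} {s : Multiset ℕ} (hs : s ∈ partsWith n N) : n ≤ N := by
  obtain ⟨hpos, rfl, rfl⟩ := mem_partsWith.1 hs
  simpa using Multiset.card_nsmul_le_sum (a := 1) hpos

lemma add_replicate_mem_partsWith_iff {n N k l : ℕ} (hl : 0 < l) {s : Multiset ℕ} :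
    s + Multiset.replicate k l ∈ partsWith n N ↔
      k ≤ n ∧ k * l ≤ N ∧ s ∈ partsWith (n - k) (N - k * l) := by
  simp only [mem_partsWith, Multiset.mem_add, Multiset.mem_replicate, Multiset.sum_add,
    Multiset.sum_replicate, smul_eq_mul, Multiset.card_add, Multiset.card_replicate]
  constructor
  · rintro ⟨hpos, hsum, hcard⟩
    exact ⟨by omega, by omega, fun x hx => hpos x (.inl hx), by omega, by omega⟩
  · rintro ⟨hkn, hkl, hpos, hsum, hcard⟩
    refine ⟨fun x hx => ?_, by omega, by omega⟩
    rcases hx with hx | ⟨-, rfl⟩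
    exacts [hpos x hx, hl]

/-- Removing `k` copies of a part `l` from a partition of `m + n` into `n` parts leaves a
partition of `(m - j) + (n - k)` into `n - k` parts, where `j = k (l - 1)`; conversely `l` is
recovered as `j / k + 1`. -/
lemma sum_partsWith_sub_replicate {M : Type*} [AddCommMonoid M] (G : ℕ → Multiset ℕ → M)
    (m n : ℕ) :
    ∑ s ∈ partsWith n (m + n), ∑ l ∈ s.toFinset, ∑ k ∈ Icc 1 (s.count l),
        G k (s - Multiset.replicate k l) =
      ∑ k ∈ Icc 1 n, ∑ j ∈ (range (m + 1)).filter (k ∣ ·),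
        ∑ s ∈ partsWith (n - k) ((m - j) + (n - k)), G k s := by
  simp_rw [sum_sigma']
  refine sum_nbij' (fun x => ⟨x.2.2, x.2.2 * (x.2.1 - 1), x.1 - .replicate x.2.2 x.2.1⟩)
    (fun y => ⟨y.2.2 + .replicate y.1 (y.2.1 / y.1 + 1), y.2.1 / y.1 + 1, y.1⟩) ?_ ?_ ?_ ?_
    (fun _ _ => rfl)
  · rintro ⟨s, l, k⟩ hx
    simp only [mem_sigma, Multiset.mem_toFinset, mem_Icc] at hx
    obtain ⟨hs, hl, hk, hkl⟩ := hx
    have hl0 : 0 < l := (mem_partsWith.1 hs).1 l hl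
    rw [← Multiset.sub_add_cancel (Multiset.le_count_iff_replicate_le.1 hkl),
      add_replicate_mem_partsWith_iff hl0] at hs
    obtain ⟨hkn, hklN, hs'⟩ := hs
    have hcard := le_of_mem_partsWith hs'
    obtain ⟨l, rfl⟩ : ∃ l', l = l' + 1 := ⟨l - 1, by omega⟩
    rw [mul_add_one] at hklN hs' hcard
    simp only [mem_sigma, mem_Icc, mem_filter, mem_range, Nat.add_sub_cancel]
    refine ⟨⟨hk, hkn⟩, ⟨by omega, dvd_mul_right _ _⟩, ?_⟩
    convert hs' using 2
    omega
  · rintro ⟨k, j, s⟩ hy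
    simp only [mem_sigma, mem_Icc, mem_filter, mem_range] at hy
    obtain ⟨⟨hk, hkn⟩, ⟨hjm, c, rfl⟩, hs⟩ := hy
    rw [Nat.mul_div_cancel_left c hk]
    simp only [mem_sigma, Multiset.mem_toFinset, mem_Icc,
      Multiset.count_add, Multiset.count_replicate_self, Multiset.mem_add, Multiset.mem_replicate]
    refine ⟨(add_replicate_mem_partsWith_iff c.add_one_pos).2 ⟨hkn, ?_, ?_⟩,
      .inr ⟨by omega, trivial⟩, by omega, by omega⟩
    · rw [mul_add_one]
      omega
    · convert hs using 2
      rw [mul_add_one]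
      omega
  · rintro ⟨s, l, k⟩ hx
    simp only [mem_sigma, Multiset.mem_toFinset, mem_Icc] at hx
    obtain ⟨hs, hl, hk, hkl⟩ := hx
    have hl0 : 0 < l := (mem_partsWith.1 hs).1 l hl
    rw [Nat.mul_div_cancel_left _ hk, Nat.sub_add_cancel hl0,
      Multiset.sub_add_cancel (Multiset.le_count_iff_replicate_le.1 hkl)]
  · rintro ⟨k, j, s⟩ hy
    simp only [mem_sigma, mem_Icc, mem_filter, mem_range] at hy
    rw [Nat.add_sub_cancel, Nat.mul_div_cancel' hy.2.1.2, Multiset.add_sub_cancel_right]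

def partitionSum (n N : ℕ) : ℚ⟦X⟧ :=
  ∑ π ∈ univ.filter (fun π : N.Partition => π.parts.card = n), fpart π

lemma partitionSum_eq_sum_partsWith (n N : ℕ) :
    partitionSum n N = ∑ s ∈ partsWith n N, multisetWeight s := by
  rw [partitionSum, partsWith, sum_image fun _ _ _ _ h => Nat.Partition.ext h]
  rfl

lemma natCast_mul_partitionSum (m n : ℕ) :
    (n : ℚ⟦X⟧) * partitionSum n (m + n) =
      ∑ k ∈ Icc 1 n, ∑ j ∈ (range (m + 1)).filter (k ∣ ·),
        (1 - X ^ k)⁻¹ * partitionSum (n - k) ((m - j) + (n - k)) := by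
  simp_rw [partitionSum_eq_sum_partsWith, mul_sum]
  rw [← sum_partsWith_sub_replicate]
  refine sum_congr rfl fun s hs => ?_
  rw [← (mem_partsWith.1 hs).2.2, card_mul_multisetWeight]

lemma partitionSum_zero_left (N : ℕ) : partitionSum 0 N = if N = 0 then 1 else 0 := by
  rcases eq_or_ne N 0 with rfl | hN
  · simp [partitionSum, fpart]
  · rw [if_neg hN, partitionSum, sum_eq_zero]
    intro π hπ
    rw [mem_filter, Multiset.card_eq_zero] at hπ
    exact absurd (π.parts_sum) (by rw [hπ.2]; exact hN.symm)

end PartitionSum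

section EulerDeriv

open MvPowerSeries

variable {σ : Type*} (R : Type*) [CommSemiring R]

def eulerDeriv (i : σ) : Derivation R (MvPowerSeries σ R) (MvPowerSeries σ R) :=
  (X i : MvPowerSeries σ R) • pderiv R i

variable {R}

lemma coeff_eulerDeriv (i : σ) (f : MvPowerSeries σ R) (d : σ →₀ ℕ) :
    coeff d (eulerDeriv R i f) = d i * coeff d f := by
  rw [eulerDeriv, Derivation.smul_apply, smul_eq_mul, MvPowerSeries.X, coeff_monomial_mul,
    coeff_pderiv]
  split_ifs with h
  · rw [Finsupp.single_le_iff] at h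
    rw [tsub_add_cancel_of_le (Finsupp.single_le_iff.2 h), Finsupp.tsub_apply,
      Finsupp.single_eq_same, ← Nat.cast_add_one, Nat.sub_add_cancel h, one_mul, mul_comm]
  · rw [Finsupp.single_le_iff, not_le, Nat.lt_one_iff] at h
    rw [h, Nat.cast_zero, zero_mul]

end EulerDeriv

section ExpTrunc

variable (K : Type*) {A : Type*} [Field K] [CommRing A] [Algebra K A]

def expTrunc (N : ℕ) (a : A) : A := ∑ m ∈ range N, (m.factorial : K)⁻¹ • a ^ m

variable {K}

lemma expTrunc_succ (N : ℕ) (a : A) :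
    expTrunc K (N + 1) a = expTrunc K N a + (N.factorial : K)⁻¹ • a ^ N :=
  sum_range_succ ..

lemma Derivation.apply_expTrunc_succ [CharZero K] (D : Derivation K A A) (N : ℕ) (a : A) :
    D (expTrunc K (N + 1) a) = D a * expTrunc K N a := by
  induction N with
  | zero => simp [expTrunc]
  | succ N ih =>
    rw [expTrunc_succ, map_add, ih, D.map_smul, Derivation.leibniz_pow, Nat.add_sub_cancel,
      ← Nat.cast_smul_eq_nsmul K, smul_smul, Nat.factorial_succ, Nat.cast_mul, mul_inv,
      mul_right_comm, inv_mul_cancel₀ (Nat.cast_ne_zero.2 N.succ_ne_zero), one_mul, expTrunc_succ,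
      mul_add, smul_eq_mul, mul_smul_comm, mul_comm (a ^ N)]

end ExpTrunc

section Uniqueness

open MvPowerSeries

variable {σ K : Type*} [Field K]

lemma coeff_pow_eq_zero_of_coeff_eq_zero (i : σ) {L : MvPowerSeries σ K}
    (hL : ∀ e, e i = 0 → coeff e L = 0) {d : σ →₀ ℕ} (hd : d i = 0) {m : ℕ} (hm : m ≠ 0) :
    coeff d (L ^ m) = 0 := by
  classical
  obtain ⟨m, rfl⟩ := Nat.exists_eq_succ_of_ne_zero hm
  rw [pow_succ', coeff_mul]
  refine sum_eq_zero fun p hp => ?_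
  have hp1 : p.1 i = 0 := by
    have := congrArg (· i) (mem_antidiagonal.1 hp)
    simp only [Finsupp.add_apply] at this
    omega
  rw [hL _ hp1, zero_mul]

lemma eq_of_eulerDeriv_eq_mul [CharZero K] (i : σ) {M F G : MvPowerSeries σ K}
    (hM : ∀ e, e i = 0 → coeff e M = 0) (h0 : ∀ d, d i = 0 → coeff d F = coeff d G)
    (hF : eulerDeriv K i F = M * F) (hG : eulerDeriv K i G = M * G) : F = G := by
  classical
  ext d
  induction hn : d i using Nat.strong_induction_on generalizing d with
  | _ n ih =>
    rcases Nat.eq_zero_or_pos n with rfl | hpos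
    · exact h0 d hn
    have hconv : coeff d (M * F) = coeff d (M * G) := by
      rw [coeff_mul, coeff_mul]
      refine sum_congr rfl fun p hp => ?_
      have hsum := congrArg (· i) (mem_antidiagonal.1 hp)
      simp only [Finsupp.add_apply] at hsum
      rcases Nat.eq_zero_or_pos (p.1 i) with h | h
      · rw [hM _ h, zero_mul, zero_mul]
      · rw [ih (p.2 i) (by omega) p.2 rfl]
    rw [← hF, ← hG, coeff_eulerDeriv, coeff_eulerDeriv, hn] at hconv
    exact mul_left_cancel₀ (Nat.cast_ne_zero.2 hpos.ne') hconv

end Uniqueness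

section PExp

open MvPowerSeries

lemma tdeg_eq_degree (d : Fin 3 →₀ ℕ) : tdeg d = d.degree := rfl

lemma coeff_pexp {f : MPS} (hf : constantCoeff f = 0) {d : Fin 3 →₀ ℕ} {N : ℕ}
    (hN : tdeg d < N) : coeff d (pexp f) = coeff d (expTrunc ℚ N f) := by
  change ∑ m ∈ range (tdeg d + 1), _ = _
  rw [expTrunc, map_sum]
  simp_rw [coeff_smul]
  refine sum_subset (range_subset_range.2 hN) fun m _ hm => ?_
  rw [mem_range, not_lt, Nat.succ_le_iff, tdeg_eq_degree] at hm
  rw [coeff_of_lt_order ((Nat.cast_lt.2 hm).trans_le (le_order_pow_of_constantCoeff_eq_zero m hf)),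
    mul_zero]

lemma eulerDeriv_pexp {f : MPS} (hf : constantCoeff f = 0) (i : Fin 3) :
    eulerDeriv ℚ i (pexp f) = eulerDeriv ℚ i f * pexp f := by
  ext d
  rw [coeff_eulerDeriv, coeff_pexp hf (Nat.lt_succ_of_lt (Nat.lt_succ_self _)), ← coeff_eulerDeriv,
    Derivation.apply_expTrunc_succ, coeff_mul, coeff_mul]
  refine sum_congr rfl fun p hp => ?_
  rw [coeff_pexp hf]
  rw [Nat.lt_succ_iff, tdeg_eq_degree, tdeg_eq_degree, ← mem_antidiagonal.1 hp, map_add]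
  exact Nat.le_add_left _ _

end PExp

section Identity

open MvPowerSeries

/-- `a ∂_a` of `Σ_{k ≥ 1} ψ_k(arg)/k`, i.e. `Σ_{k ≥ 1} Σ_{i,m ≥ 0} (q^i t^m a)^k`. -/
def eulerKernel : MPS := fun e => if 0 < e 2 ∧ ∀ j, e 2 ∣ e j then 1 else 0

lemma coeff_eulerKernel_of_eq_zero {e : Fin 3 →₀ ℕ} (he : e 2 = 0) : coeff e eulerKernel = 0 :=
  if_neg (by omega)

lemma coeff_adams_arg {k : ℕ} (hk : k ≠ 0) (d : Fin 3 →₀ ℕ) :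
    coeff d (adams k arg) = if d 2 = k ∧ ∀ j, k ∣ d j then 1 else 0 := by
  change (if ∀ j, k ∣ d j then (if d 2 / k = 1 then 1 else 0) else 0) = _
  by_cases h : ∀ j, k ∣ d j
  · simp [h, Nat.div_eq_iff_eq_mul_left (Nat.pos_of_ne_zero hk) (h 2)]
  · simp [h]

lemma coeff_plethLog_arg (d : Fin 3 →₀ ℕ) :
    coeff d (plethLog arg) = if 0 < d 2 ∧ ∀ j, d 2 ∣ d j then (d 2 : ℚ)⁻¹ else 0 := by
  change ∑ k ∈ Icc 1 (tdeg d), (k : ℚ)⁻¹ * coeff d (adams k arg) = _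
  rw [sum_congr rfl fun k hk => by rw [coeff_adams_arg (by simp at hk; omega)]]
  simp_rw [mul_ite, mul_one, mul_zero, ite_and]
  have hmem : d 2 ∈ Icc 1 (tdeg d) ↔ 0 < d 2 := by
    have := Finsupp.le_degree 2 d
    rw [mem_Icc, tdeg_eq_degree]
    omega
  simp only [sum_ite_eq, hmem]

lemma coeff_plethLog_arg_of_eq_zero {e : Fin 3 →₀ ℕ} (he : e 2 = 0) :
    coeff e (plethLog arg) = 0 := by
  rw [coeff_plethLog_arg, if_neg (by omega)]

lemma constantCoeff_plethLog_arg : constantCoeff (plethLog arg) = 0 := by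
  rw [← coeff_zero_eq_constantCoeff_apply, coeff_plethLog_arg_of_eq_zero rfl]

lemma eulerDeriv_plethLog_arg : eulerDeriv ℚ 2 (plethLog arg) = eulerKernel := by
  ext d
  rw [coeff_eulerDeriv, coeff_plethLog_arg]
  change _ = if 0 < d 2 ∧ ∀ j, d 2 ∣ d j then (1 : ℚ) else 0
  split_ifs with h
  · exact mul_inv_cancel₀ (Nat.cast_ne_zero.2 h.1.ne')
  · exact mul_zero _

lemma eulerDeriv_PExp_arg : eulerDeriv ℚ 2 (PExp arg) = eulerKernel * PExp arg := by
  rw [PExp, eulerDeriv_pexp constantCoeff_plethLog_arg, eulerDeriv_plethLog_arg]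

lemma coeff_PExp_arg_of_eq_zero {d : Fin 3 →₀ ℕ} (hd : d 2 = 0) :
    coeff d (PExp arg) = coeff d 1 := by
  rw [PExp, coeff_pexp constantCoeff_plethLog_arg (Nat.lt_succ_self (tdeg d)), expTrunc, map_sum,
    sum_eq_single_of_mem 0 (by simp)]
  · simp
  · intro m _ hm
    rw [coeff_smul, coeff_pow_eq_zero_of_coeff_eq_zero 2 (fun _ => coeff_plethLog_arg_of_eq_zero)
      hd hm, mul_zero]

lemma coeff_lhs (d : Fin 3 →₀ ℕ) :
    coeff d lhs = PowerSeries.coeff (d 0) (partitionSum (d 2) (d 1 + d 2)) := rfl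

lemma coeff_lhs_of_eq_zero {d : Fin 3 →₀ ℕ} (hd : d 2 = 0) : coeff d lhs = coeff d 1 := by
  have hd0 : d = 0 ↔ d 0 = 0 ∧ d 1 = 0 := by
    simp [Finsupp.ext_iff, Fin.forall_fin_succ, hd]
  rw [coeff_lhs, hd, partitionSum_zero_left, coeff_one, add_zero]
  simp only [hd0]
  split_ifs <;> simp_all [PowerSeries.coeff_one]

def expVec (x y z : ℕ) : Fin 3 →₀ ℕ := Finsupp.equivFunOnFinite.symm ![x, y, z]

@[simp] lemma expVec_apply_zero (x y z : ℕ) : expVec x y z 0 = x := rfl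
@[simp] lemma expVec_apply_one (x y z : ℕ) : expVec x y z 1 = y := rfl
@[simp] lemma expVec_apply_two (x y z : ℕ) : expVec x y z 2 = z := rfl

lemma expVec_eta (e : Fin 3 →₀ ℕ) : expVec (e 0) (e 1) (e 2) = e := by
  ext j
  fin_cases j <;> rfl

lemma coeff_eulerKernel_mul (F : MPS) (d : Fin 3 →₀ ℕ) :
    coeff d (eulerKernel * F) =
      ∑ k ∈ Icc 1 (d 2), ∑ j ∈ (range (d 1 + 1)).filter (k ∣ ·),
        ∑ i ∈ (range (d 0 + 1)).filter (k ∣ ·), coeff (d - expVec i j k) F := by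
  classical
  have hK : ∀ p ∈ antidiagonal d, coeff p.1 eulerKernel * coeff p.2 F =
      if 0 < p.1 2 ∧ ∀ j, p.1 2 ∣ p.1 j then coeff p.2 F else 0 := fun p _ => by
    change (if _ then (1 : ℚ) else 0) * _ = _
    split_ifs <;> simp
  rw [coeff_mul, sum_congr rfl hK, ← sum_filter]
  simp_rw [sum_sigma']
  refine sum_nbij' (fun p => ⟨p.1 2, p.1 1, p.1 0⟩)
    (fun y => (expVec y.2.2 y.2.1 y.1, d - expVec y.2.2 y.2.1 y.1)) ?_ ?_ ?_ ?_ ?_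
  · rintro ⟨e, f⟩ hp
    simp only [mem_filter, HasAntidiagonal.mem_antidiagonal, Finsupp.ext_iff,
      Finsupp.add_apply] at hp
    obtain ⟨hsum, hpos, hdvd⟩ := hp
    have := hsum 0
    have := hsum 1
    have := hsum 2
    simp only [mem_sigma, mem_Icc, mem_filter, mem_range]
    exact ⟨⟨hpos, by omega⟩, ⟨by omega, hdvd 1⟩, by omega, hdvd 0⟩
  · rintro ⟨k, j, i⟩ hy
    simp only [mem_sigma, mem_Icc, mem_filter, mem_range] at hy
    obtain ⟨⟨hk, hkd⟩, ⟨hj, hkj⟩, hi, hki⟩ := hy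
    have hle : expVec i j k ≤ d := by
      rw [Finsupp.le_def, Fin.forall_fin_succ, Fin.forall_fin_succ, Fin.forall_fin_one]
      exact ⟨by simp; omega, by simp; omega, by simp; omega⟩
    simp only [mem_filter, HasAntidiagonal.mem_antidiagonal, add_tsub_cancel_of_le hle,
      Fin.forall_fin_succ, IsEmpty.forall_iff, expVec_apply_two]
    exact ⟨trivial, hk, hki, hkj, dvd_rfl, trivial⟩
  · rintro ⟨e, f⟩ hp
    simp only [mem_filter, HasAntidiagonal.mem_antidiagonal] at hp
    rw [expVec_eta, ← hp.1, add_tsub_cancel_left]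
  · rintro ⟨k, j, i⟩ -
    rfl
  · rintro ⟨e, f⟩ hp
    simp only [mem_filter, HasAntidiagonal.mem_antidiagonal] at hp
    rw [expVec_eta, ← hp.1, add_tsub_cancel_left]

lemma eulerDeriv_lhs : eulerDeriv ℚ 2 lhs = eulerKernel * lhs := by
  ext d
  rw [coeff_eulerDeriv, coeff_eulerKernel_mul, coeff_lhs, ← PowerSeries.coeff_C_mul, map_natCast,
    natCast_mul_partitionSum, map_sum]
  refine sum_congr rfl fun k hk => ?_
  rw [map_sum]
  refine sum_congr rfl fun j _ => ?_
  rw [coeff_inv_one_sub_X_pow_mul (by simp at hk; omega)]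
  refine sum_congr rfl fun i _ => ?_
  rw [coeff_lhs]
  simp

end Identity

/-- `Σ_π f(π) a^{l(π)} t^{|π|−l(π)} = Exp( (1/(1−𝕃⁻¹)) · a/(1−t) )`. -/
theorem partition_sum_eq_Exp : lhs = PExp arg :=
  eq_of_eulerDeriv_eq_mul 2 (fun _ => coeff_eulerKernel_of_eq_zero)
    (fun _ hd => by rw [coeff_lhs_of_eq_zero hd, coeff_PExp_arg_of_eq_zero hd])
    eulerDeriv_lhs eulerDeriv_PExp_arg

end Stmt11
end
end

section
/- Let {π^{[a,b]}}_{0≤a,b≤N−1} be partitions and define, for fixed subsets I_2 ⊆ ℤ/N and S a set of cyclic intervals, T − B := Σ of the differences listed in the seven cases of Lemma (dif). Then T − B = −(1/2) Σ_{i∈I_2} ( Σ_{b≠i} l(π^{[i+1,b]}) − Σ_{c≠i+1} l(π^{[c,i]}) )² − (1/2) Σ_{[a,b]∈S} Σ_{l≥1} (b_l^{a,b})², using the identities M(π,ρ) − M(π',ρ') = l(π)l(ρ) and M(π,π) − M(π',π) = (1/2)l(π)² + (1/2)Σ_l b_l². -/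
/-!
Summing the telescoping differences of the tail sums `T_i = Σ_{j ≥ i} b_j` gives
`M(π,ρ) − M(π',ρ') = l(π) l(ρ)`, and `Σ_i (T_i − T_{i+1})² = Σ_l b_l²` gives
`M(π',π) − M(π,π) = −½ l(π)² − ½ Σ_l b_l²`. After these substitutions `T − B` is a quadratic
form in the lengths. For each `i ∈ I₂`, the products of the row `l(π^{[i+1,b]})` with the column
`l(π^{[c,i]})`, minus the products of pairs inside the row and inside the column, are
`−½ (row − col)²` plus half the squares of the row and column entries. An interval `[a,b]` occurs
in these squares once for each of the conditions `a − 1 ∈ I₂`, `b ∈ I₂` it satisfies; the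
intervals satisfying both cancel the fourth block, those satisfying exactly one (the set `S`)
half of the `l(π)²` in the diagonal terms.
-/

open Finset

namespace Stmt19

/-- The pairing `M(π,ρ) = Σ_{i ≥ 1} (Σ_{j ≥ i} b_j)(Σ_{j ≥ i} c_j)` on partitions in
multiplicity notation (all multiplicities vanishing above `D`). -/
def Mq (D : ℕ) (b c : ℕ → ℕ) : ℚ :=
  ∑ i ∈ Icc 1 D, (∑ j ∈ Icc i D, (b j : ℚ)) * (∑ j ∈ Icc i D, (c j : ℚ))

/-- The operation `π ↦ π'` removing one box from each column (shifting
multiplicities down by one index). -/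
def shift (b : ℕ → ℕ) : ℕ → ℕ := fun j => b (j + 1)

/-- The length `l(π) = Σ_j b_j` (number of parts). -/
def len (D : ℕ) (b : ℕ → ℕ) : ℚ := ∑ j ∈ Icc 1 D, (b j : ℚ)

theorem sum_Icc_one_sub_succ {M : Type*} [AddCommGroup M] (D : ℕ) (f : ℕ → M) :
    ∑ i ∈ Icc 1 D, (f i - f (i + 1)) = f 1 - f (D + 1) := by
  induction D with
  | zero => simp
  | succ D ih => rw [sum_Icc_succ_top (by omega), ih]; abel

section Pairing

variable {D : ℕ} {b c : ℕ → ℕ}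

theorem sum_Icc_shift (hb : ∀ j, D < j → b j = 0) (i : ℕ) :
    ∑ j ∈ Icc i D, (shift b j : ℚ) = ∑ j ∈ Icc (i + 1) D, (b j : ℚ) := by
  have h : ∑ j ∈ Icc i D, (shift b j : ℚ) = ∑ j ∈ Icc (i + 1) (D + 1), (b j : ℚ) := by
    rw [← map_add_right_Icc, sum_map]
    rfl
  rcases le_or_gt i D with hi | hi
  · rw [h, sum_Icc_succ_top (by omega), hb (D + 1) D.lt_succ_self, Nat.cast_zero, add_zero]
  · rw [h, Icc_eq_empty (by omega), Icc_eq_empty (by omega)]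

theorem Mq_sub_Mq_shift (hb : ∀ j, D < j → b j = 0) (hc : ∀ j, D < j → c j = 0) :
    Mq D b c - Mq D (shift b) (shift c) = len D b * len D c := by
  simp only [Mq, sum_Icc_shift hb, sum_Icc_shift hc, ← sum_sub_distrib]
  rw [sum_Icc_one_sub_succ D fun i => (∑ j ∈ Icc i D, (b j : ℚ)) * ∑ j ∈ Icc i D, (c j : ℚ)]
  simp [len]

theorem Mq_shift_self_sub_Mq_self (hb : ∀ j, D < j → b j = 0) :
    Mq D (shift b) b - Mq D b b =
      -(1 / 2) * len D b ^ 2 - (1 / 2) * ∑ l ∈ Icc 1 D, (b l : ℚ) ^ 2 := by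
  set T : ℕ → ℚ := fun i => ∑ j ∈ Icc i D, (b j : ℚ)
  have hT : ∀ i ∈ Icc 1 D, T i = b i + T (i + 1) := fun i hi => by
    simp only [T, Icc_add_one_left_eq_Ioc]
    exact (add_sum_Ioc_eq_sum_Icc (mem_Icc.1 hi).2).symm
  have hsq : Mq D b b - 2 * Mq D (shift b) b + Mq D (shift b) (shift b) =
      ∑ l ∈ Icc 1 D, (b l : ℚ) ^ 2 :=
    calc _ = ∑ i ∈ Icc 1 D, (T i * T i - 2 * (T (i + 1) * T i) + T (i + 1) * T (i + 1)) := by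
          simp only [Mq, sum_Icc_shift hb, sum_add_distrib, sum_sub_distrib, ← mul_sum]; rfl
      _ = ∑ l ∈ Icc 1 D, (b l : ℚ) ^ 2 := sum_congr rfl fun i hi => by rw [hT i hi]; ring
  linear_combination (-1 / 2 : ℚ) * hsq - (1 / 2 : ℚ) * Mq_sub_Mq_shift hb hb

end Pairing

theorem sum_filter_and_add_sum_filter_and {γ R : Type*} [Semiring R] (s : Finset γ)
    (A B C : γ → Prop) [DecidablePred A] [DecidablePred B] [DecidablePred C]
    (hC : ∀ x, Xor (A x) (B x) → C x) (f : γ → R) :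
    ∑ x ∈ s.filter (fun x => A x ∧ C x), f x + ∑ x ∈ s.filter (fun x => B x ∧ C x), f x =
      2 * ∑ x ∈ s.filter (fun x => A x ∧ B x ∧ C x), f x +
        ∑ x ∈ s.filter (fun x => Xor (A x) (B x)), f x := by
  simp only [sum_filter, mul_sum, ← sum_add_distrib]
  refine sum_congr rfl fun x _ => ?_
  have hxor := hC x
  by_cases hA : A x <;> by_cases hB : B x <;> by_cases hCx : C x <;> simp_all [Xor, two_mul]

section Pairs

variable {α β R : Type*} [CommRing R] [DecidableEq α] [LinearOrder β] {v : α → β}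

theorem two_mul_sum_filter_lt_mul (hv : Function.Injective v) (s : Finset α) (x : α → R) :
    2 * ∑ p ∈ (s ×ˢ s).filter (fun p => v p.1 < v p.2), x p.1 * x p.2 =
      (∑ a ∈ s, x a) ^ 2 - ∑ a ∈ s, x a ^ 2 := by
  have hsplit : ∀ a b, x a * x b = (if v a < v b then x a * x b else 0) +
      (if v b < v a then x b * x a else 0) + (if a = b then x a * x b else 0) := by
    intro a b
    rcases lt_trichotomy (v a) (v b) with h | h | h
    · simp [h, h.not_gt, hv.ne_iff.1 h.ne]
    · simp [hv h]
    · simp [h, h.not_gt, hv.ne_iff.1 h.ne', mul_comm]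
  have hswap : ∑ a ∈ s, ∑ b ∈ s, (if v b < v a then x b * x a else 0) =
      ∑ a ∈ s, ∑ b ∈ s, (if v a < v b then x a * x b else 0) := sum_comm
  have hdiag : ∑ a ∈ s, ∑ b ∈ s, (if a = b then x a * x b else 0) = ∑ a ∈ s, x a ^ 2 :=
    sum_congr rfl fun a ha => by simp [ha, sq]
  have hsq : (∑ a ∈ s, x a) ^ 2 = ∑ a ∈ s, ∑ b ∈ s,
      ((if v a < v b then x a * x b else 0) + (if v b < v a then x b * x a else 0) +
        (if a = b then x a * x b else 0)) := by
    rw [sq, sum_mul_sum]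
    exact sum_congr rfl fun a _ => sum_congr rfl fun b _ => hsplit a b
  rw [hsq, sum_filter, sum_product]
  simp only [sum_add_distrib, hswap, hdiag]
  ring

theorem two_mul_sum_filter_lt_mul_univ [Fintype α] (hv : Function.Injective v) (q : α → Prop)
    [DecidablePred q] (x : α → R) :
    2 * ∑ p ∈ (univ ×ˢ univ : Finset (α × α)).filter (fun p => v p.1 < v p.2 ∧ q p.1 ∧ q p.2),
        x p.1 * x p.2 =
      (∑ a ∈ univ.filter q, x a) ^ 2 - ∑ a ∈ univ.filter q, x a ^ 2 := by
  rw [← two_mul_sum_filter_lt_mul hv]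
  congr 2
  ext p
  simp only [mem_filter, mem_product, mem_univ, true_and]
  tauto

end Pairs

section Cyclic

variable {G : Type*} [AddGroupWithOne G] [Fintype G] [DecidableEq G]

theorem sum_rows_eq_sum_filter {M : Type*} [AddCommMonoid M] (I : Finset G) (f : G → G → M) :
    ∑ i ∈ I, ∑ b ∈ univ.filter (· ≠ i), f (i + 1) b =
      ∑ p ∈ (univ ×ˢ univ : Finset (G × G)).filter (fun p => p.1 - 1 ∈ I ∧ p.2 ≠ p.1 - 1),
        f p.1 p.2 := by
  rw [sum_filter, sum_product, ← Equiv.sum_comp (Equiv.addRight (1 : G))]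
  simp only [Equiv.coe_addRight, add_sub_cancel_right, ite_and, sum_ite_irrel, sum_const_zero,
    ← sum_filter, filter_mem_eq_inter, univ_inter]

theorem sum_cols_eq_sum_filter {M : Type*} [AddCommMonoid M] (I : Finset G) (f : G → G → M) :
    ∑ i ∈ I, ∑ c ∈ univ.filter (· ≠ i + 1), f c i =
      ∑ p ∈ (univ ×ˢ univ : Finset (G × G)).filter (fun p => p.2 ∈ I ∧ p.2 ≠ p.1 - 1),
        f p.1 p.2 := by
  have h : ∀ a b : G, b = a - 1 ↔ a = b + 1 := fun a b => by rw [eq_sub_iff_add_eq, eq_comm]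
  rw [sum_filter, sum_product, sum_comm]
  simp only [ne_eq, h, ite_and, sum_ite_irrel, sum_const_zero,
    ← sum_filter, filter_mem_eq_inter, univ_inter]

theorem sum_row_sq_add_sum_col_sq {R : Type*} [Semiring R] (I : Finset G) (F : G → G → R) :
    ∑ i ∈ I, ∑ b ∈ univ.filter (· ≠ i), F (i + 1) b ^ 2 +
        ∑ i ∈ I, ∑ c ∈ univ.filter (· ≠ i + 1), F c i ^ 2 =
      2 * ∑ p ∈ (univ ×ˢ univ : Finset (G × G)).filter
          (fun p => p.1 - 1 ∈ I ∧ p.2 ∈ I ∧ p.2 ≠ p.1 - 1), F p.1 p.2 ^ 2 +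
        ∑ p ∈ (univ ×ˢ univ : Finset (G × G)).filter
          (fun p => Xor (p.1 - 1 ∈ I) (p.2 ∈ I)), F p.1 p.2 ^ 2 := by
  rw [sum_rows_eq_sum_filter I fun a b => F a b ^ 2,
    sum_cols_eq_sum_filter I fun a b => F a b ^ 2]
  refine sum_filter_and_add_sum_filter_and _ _ _ _ (fun p hxor hp => ?_) _
  rw [hp] at hxor
  exact xor_self _ ▸ hxor

theorem two_mul_row_col_sub_pairs {β R : Type*} [LinearOrder β] [CommRing R] {v : G → β}
    (hv : Function.Injective v) (i : G) (F : G → G → R) :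
    2 * (∑ p ∈ (univ ×ˢ univ : Finset (G × G)).filter (fun p => p.1 ≠ i ∧ p.2 ≠ i + 1),
          F (i + 1) p.1 * F p.2 i
        - ∑ p ∈ (univ ×ˢ univ : Finset (G × G)).filter
            (fun p => v p.1 < v p.2 ∧ p.1 ≠ i ∧ p.2 ≠ i), F (i + 1) p.1 * F (i + 1) p.2
        - ∑ p ∈ (univ ×ˢ univ : Finset (G × G)).filter
            (fun p => v p.1 < v p.2 ∧ p.1 ≠ i + 1 ∧ p.2 ≠ i + 1), F p.1 i * F p.2 i) =
      -(∑ b ∈ univ.filter (· ≠ i), F (i + 1) b - ∑ c ∈ univ.filter (· ≠ i + 1), F c i) ^ 2 +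
        ∑ b ∈ univ.filter (· ≠ i), F (i + 1) b ^ 2 +
        ∑ c ∈ univ.filter (· ≠ i + 1), F c i ^ 2 := by
  rw [mul_sub, mul_sub, two_mul_sum_filter_lt_mul_univ hv (· ≠ i) (F (i + 1)),
    two_mul_sum_filter_lt_mul_univ hv (· ≠ i + 1) (F · i),
    filter_product (· ≠ i) (· ≠ i + 1), sum_product' _ _ fun a b => F (i + 1) a * F b i,
    ← sum_mul_sum]
  ring

end Cyclic

/-- The closed formula for `T − B`: given partitions `π^{[a,b]}` indexed by pairs in
`ℤ/N` (with multiplicities `P a b : ℕ → ℕ` vanishing above `D`), a subset `I₂ ⊆ ℤ/N`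
(with `I₃ = I₂ + 1`) and the set `S` of intervals `[a,b]` with exactly one of
`a ∈ I₃`, `b ∈ I₂`, the explicit sum of differences `T − B` of Lemma (dif) equals
`−(1/2) Σ_{i∈I₂} (Σ_{b≠i} l(π^{[i+1,b]}) − Σ_{c≠i+1} l(π^{[c,i]}))²
 −(1/2) Σ_{[a,b]∈S} Σ_{l≥1} (b_l^{a,b})²`. -/
theorem T_sub_B_closed_form
    (N : ℕ) [NeZero N] (D : ℕ)
    (P : ZMod N → ZMod N → ℕ → ℕ)
    (hP : ∀ a b j, D < j → P a b j = 0)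
    (I₂ : Finset (ZMod N)) :
    (∑ i ∈ I₂,
        ∑ p ∈ (univ ×ˢ univ : Finset (ZMod N × ZMod N)).filter
            (fun p => p.1 ≠ i ∧ p.2 ≠ i + 1),
          (Mq D (P (i + 1) p.1) (P p.2 i)
            - Mq D (shift (P (i + 1) p.1)) (shift (P p.2 i))))
      + (∑ i ∈ I₂,
          ∑ p ∈ (univ ×ˢ univ : Finset (ZMod N × ZMod N)).filter
              (fun p => p.1.val < p.2.val ∧ p.1 ≠ i ∧ p.2 ≠ i),
            (Mq D (shift (P (i + 1) p.1)) (shift (P (i + 1) p.2))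
              - Mq D (P (i + 1) p.1) (P (i + 1) p.2)))
      + (∑ i ∈ I₂,
          ∑ p ∈ (univ ×ˢ univ : Finset (ZMod N × ZMod N)).filter
              (fun p => p.1.val < p.2.val ∧ p.1 ≠ i + 1 ∧ p.2 ≠ i + 1),
            (Mq D (shift (P p.1 i)) (shift (P p.2 i))
              - Mq D (P p.1 i) (P p.2 i)))
      + (∑ p ∈ (univ ×ˢ univ : Finset (ZMod N × ZMod N)).filter
            (fun p => p.1 - 1 ∈ I₂ ∧ p.2 ∈ I₂ ∧ p.2 ≠ p.1 - 1),
          (Mq D (shift (P p.1 p.2)) (shift (P p.1 p.2))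
            - Mq D (P p.1 p.2) (P p.1 p.2)))
      + (∑ p ∈ (univ ×ˢ univ : Finset (ZMod N × ZMod N)).filter
            (fun p => Xor (p.1 - 1 ∈ I₂) (p.2 ∈ I₂)),
          (Mq D (shift (P p.1 p.2)) (P p.1 p.2)
            - Mq D (P p.1 p.2) (P p.1 p.2)))
      =
      -(1 / 2 : ℚ) *
          ∑ i ∈ I₂,
            ((∑ b ∈ univ.filter (fun b : ZMod N => b ≠ i), len D (P (i + 1) b))
              - ∑ c ∈ univ.filter (fun c : ZMod N => c ≠ i + 1), len D (P c i)) ^ 2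
        - (1 / 2 : ℚ) *
            ∑ p ∈ (univ ×ˢ univ : Finset (ZMod N × ZMod N)).filter
                (fun p => Xor (p.1 - 1 ∈ I₂) (p.2 ∈ I₂)),
              ∑ l ∈ Icc 1 D, (P p.1 p.2 l : ℚ) ^ 2 := by
  have hprod (a b a' b' : ZMod N) :
      Mq D (P a b) (P a' b') - Mq D (shift (P a b)) (shift (P a' b')) =
        len D (P a b) * len D (P a' b') :=
    Mq_sub_Mq_shift (hP a b) (hP a' b')
  have hprod' (a b a' b' : ZMod N) :
      Mq D (shift (P a b)) (shift (P a' b')) - Mq D (P a b) (P a' b') =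
        -(len D (P a b) * len D (P a' b')) := by
    rw [← hprod, neg_sub]
  have hdiag (a b : ZMod N) := Mq_shift_self_sub_Mq_self (hP a b)
  have hcross := sum_congr rfl fun i (_ : i ∈ I₂) =>
    two_mul_row_col_sub_pairs (ZMod.val_injective N) i fun a b => len D (P a b)
  have hsq := sum_row_sq_add_sum_col_sq I₂ fun a b => len D (P a b)
  simp only [hprod, hprod', hdiag, sum_neg_distrib, sum_sub_distrib, ← mul_sum, ← sq]
  simp only [← mul_sum, sum_sub_distrib, sum_add_distrib, sum_neg_distrib] at hcross
  linear_combination (1 / 2 : ℚ) * hcross + (1 / 2 : ℚ) * hsq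

end Stmt19
end
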